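/- Let γ > 0 and let K be an m×n real matrix such that γ(A − BK) is Schur stable; write A_K = A − BK. Let S be a real symmetric n×n matrix, Y a real n×m matrix, and W a real symmetric m×m matrix satisfying the three equations: (i) γ²( A_KᵀSA_K + A_KᵀSBK + KᵀBᵀSA_K + KᵀWK + KᵀBᵀSBK − YK − KᵀYᵀ ) − S = 0; (ii) A_KᵀSB + KᵀBᵀSB − Y = 0; (iii) BᵀSB − W = 0. Then S = 0, Y = 0, and W = 0. -/

import Mathlib

/-!
Substituting (ii) and (iii) into (i) collapses all the cross terms, leaving the Stein equation
`Mᵀ S M = S` for the Schur stable matrix `M = γ A_K`. Iterating gives `S = (Mᵏ)ᵀ S Mᵏ`, and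
`Mᵏ → 0` by Gelfand's formula, so `S = 0`; then `Y = 0` and `W = 0` by (ii) and (iii).
-/

open Matrix

/-- A real square matrix is Schur stable if every eigenvalue of it, viewed as a
complex matrix, has modulus strictly less than `1`. -/
def SchurStable {n : ℕ} (M : Matrix (Fin n) (Fin n) ℝ) : Prop :=
  ∀ μ ∈ spectrum ℂ (M.map (algebraMap ℝ ℂ)), ‖μ‖ < 1

open Filter Topology
open scoped ENNReal

section BanachAlgebra

variable {A : Type*} [NormedRing A] [NormedAlgebra ℂ A] [CompleteSpace A]

theorem spectralRadius_lt_one_of_forall_norm_lt_one {a : A}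
    (h : ∀ z ∈ spectrum ℂ a, ‖z‖ < 1) : spectralRadius ℂ a < 1 := by
  rcases (spectrum ℂ a).eq_empty_or_nonempty with he | hne
  · simp [spectralRadius, he]
  · exact_mod_cast spectrum.spectralRadius_lt_of_forall_lt_of_nonempty hne (r := 1)
      (fun z hz => by simpa [← NNReal.coe_lt_coe] using h z hz)

theorem tendsto_pow_atTop_nhds_zero_of_spectralRadius_lt_one {a : A}
    (h : spectralRadius ℂ a < 1) : Tendsto (a ^ ·) atTop (𝓝 0) := by
  obtain ⟨r, hρr, hr1⟩ := ENNReal.lt_iff_exists_nnreal_btwn.mp h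
  have hnorm : ∀ᶠ k : ℕ in atTop, ‖a ^ k‖ ≤ (r : ℝ) ^ k := by
    filter_upwards [(spectrum.gelfand_formula a).eventually_lt_const hρr, eventually_gt_atTop 0]
      with k hk hk0
    have : (‖a ^ k‖₊ : ℝ≥0∞) < (r : ℝ≥0∞) ^ k := by
      simpa [one_div, ENNReal.rpow_inv_lt_iff (Nat.cast_pos.mpr hk0)] using hk
    exact_mod_cast this.le
  rw [tendsto_zero_iff_norm_tendsto_zero]
  exact squeeze_zero' (.of_forall fun _ => norm_nonneg _) hnorm
    (tendsto_pow_atTop_nhds_zero_of_lt_one r.coe_nonneg (mod_cast hr1))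

end BanachAlgebra

namespace Matrix

variable {n : Type*} [Fintype n] [DecidableEq n]

theorem tendsto_pow_atTop_nhds_zero_of_forall_norm_lt_one {M : Matrix n n ℂ}
    (h : ∀ z ∈ spectrum ℂ M, ‖z‖ < 1) : Tendsto (M ^ ·) atTop (𝓝 0) := by
  let := Matrix.linftyOpNormedRing (n := n) (α := ℂ)
  let := Matrix.linftyOpNormedAlgebra (n := n) (R := ℂ) (α := ℂ)
  have : CompleteSpace (Matrix n n ℂ) := FiniteDimensional.complete ℂ _
  exact tendsto_pow_atTop_nhds_zero_of_spectralRadius_lt_one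
    (spectralRadius_lt_one_of_forall_norm_lt_one h)

theorem eq_zero_of_transpose_mul_mul_eq_self {R : Type*} [CommRing R] [TopologicalSpace R]
    [IsTopologicalRing R] [T2Space R] {M S : Matrix n n R}
    (hM : Tendsto (M ^ ·) atTop (𝓝 0)) (hS : Mᵀ * S * M = S) : S = 0 := by
  have hpow : ∀ k : ℕ, (M ^ k)ᵀ * S * M ^ k = S := by
    intro k
    induction k with
    | zero => simp
    | succ k ih =>
      rw [pow_succ, transpose_mul]
      calc Mᵀ * (M ^ k)ᵀ * S * (M ^ k * M) = Mᵀ * ((M ^ k)ᵀ * S * M ^ k) * M := by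
            simp only [Matrix.mul_assoc]
        _ = S := by rw [ih, hS]
  have hlim : Tendsto (fun k : ℕ => (M ^ k)ᵀ * S * M ^ k) atTop
      (𝓝 ((0 : Matrix n n R)ᵀ * S * 0)) :=
    ((continuous_id.matrix_transpose.tendsto _ |>.comp hM).mul_const S).mul hM
  simp only [hpow, transpose_zero, Matrix.zero_mul, Matrix.mul_zero] at hlim
  exact tendsto_nhds_unique tendsto_const_nhds hlim

end Matrix

theorem SchurStable.tendsto_pow_atTop_nhds_zero {n : ℕ} {M : Matrix (Fin n) (Fin n) ℝ}
    (hM : SchurStable M) : Tendsto (M ^ ·) atTop (𝓝 0) := by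
  have hC := Matrix.tendsto_pow_atTop_nhds_zero_of_forall_norm_lt_one hM
  have hre := ((continuous_id.matrix_map Complex.continuous_re).tendsto 0).comp hC
  have hmap : ∀ k : ℕ, M.map (algebraMap ℝ ℂ) ^ k = (M ^ k).map (algebraMap ℝ ℂ) :=
    fun k => (map_pow (algebraMap ℝ ℂ).mapMatrix M k).symm
  simp only [id, Matrix.map_zero _ Complex.zero_re] at hre
  refine hre.congr fun k => ?_
  ext i j
  simp only [Function.comp_apply, hmap, Matrix.map_apply]
  exact Complex.ofReal_re _

theorem Matrix.dataEquation_bracket_eq {R : Type*} [CommRing R] {n m : Type*}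
    [Fintype n] [Fintype m] {AK S : Matrix n n R} {B : Matrix n m R} {K : Matrix m n R}
    {Y : Matrix n m R} {W : Matrix m m R} (hS : S.IsSymm)
    (hY : Y = AKᵀ * S * B + Kᵀ * Bᵀ * S * B) (hW : W = Bᵀ * S * B) :
    AKᵀ * S * AK + AKᵀ * S * B * K + Kᵀ * Bᵀ * S * AK + Kᵀ * W * K
      + Kᵀ * Bᵀ * S * B * K - Y * K - Kᵀ * Yᵀ = AKᵀ * S * AK := by
  subst hY hW
  simp only [transpose_add, transpose_mul, transpose_transpose, hS.eq, Matrix.mul_add,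
    Matrix.add_mul, Matrix.mul_assoc]
  abel

theorem stmt_11_general {n m : ℕ}
    (A : Matrix (Fin n) (Fin n) ℝ) (B : Matrix (Fin n) (Fin m) ℝ)
    (γ : ℝ)
    (K : Matrix (Fin m) (Fin n) ℝ)
    (hK : SchurStable (γ • (A - B * K)))
    (AK : Matrix (Fin n) (Fin n) ℝ) (hAK : AK = A - B * K)
    (S : Matrix (Fin n) (Fin n) ℝ) (hSsymm : S.IsSymm)
    (Y : Matrix (Fin n) (Fin m) ℝ)
    (W : Matrix (Fin m) (Fin m) ℝ)
    (h1 : γ ^ 2 • (AKᵀ * S * AK + AKᵀ * S * B * K + Kᵀ * Bᵀ * S * AK + Kᵀ * W * K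
        + Kᵀ * Bᵀ * S * B * K - Y * K - Kᵀ * Yᵀ) - S = 0)
    (h2 : AKᵀ * S * B + Kᵀ * Bᵀ * S * B - Y = 0)
    (h3 : Bᵀ * S * B - W = 0) :
    S = 0 ∧ Y = 0 ∧ W = 0 := by
  have hW : W = Bᵀ * S * B := (sub_eq_zero.mp h3).symm
  have hY : Y = AKᵀ * S * B + Kᵀ * Bᵀ * S * B := (sub_eq_zero.mp h2).symm
  rw [Matrix.dataEquation_bracket_eq hSsymm hY hW, sub_eq_zero] at h1
  have hStein : (γ • AK)ᵀ * S * (γ • AK) = S := by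
    rw [transpose_smul, smul_mul_assoc, smul_mul_assoc, mul_smul_comm, smul_smul, ← sq, h1]
  have hS : S = 0 := Matrix.eq_zero_of_transpose_mul_mul_eq_self
    (hAK ▸ hK).tendsto_pow_atTop_nhds_zero hStein
  exact ⟨hS, by simp [hY, hS], by simp [hW, hS]⟩

theorem stmt_11 {n m : ℕ}
    (A : Matrix (Fin n) (Fin n) ℝ) (B : Matrix (Fin n) (Fin m) ℝ)
    (γ : ℝ) (hγ : 0 < γ)
    (K : Matrix (Fin m) (Fin n) ℝ)
    (hK : SchurStable (γ • (A - B * K)))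
    (AK : Matrix (Fin n) (Fin n) ℝ) (hAK : AK = A - B * K)
    (S : Matrix (Fin n) (Fin n) ℝ) (hSsymm : S.IsSymm)
    (Y : Matrix (Fin n) (Fin m) ℝ)
    (W : Matrix (Fin m) (Fin m) ℝ) (hWsymm : W.IsSymm)
    (h1 : γ ^ 2 • (AKᵀ * S * AK + AKᵀ * S * B * K + Kᵀ * Bᵀ * S * AK + Kᵀ * W * K
        + Kᵀ * Bᵀ * S * B * K - Y * K - Kᵀ * Yᵀ) - S = 0)
    (h2 : AKᵀ * S * B + Kᵀ * Bᵀ * S * B - Y = 0)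
    (h3 : Bᵀ * S * B - W = 0) :
    S = 0 ∧ Y = 0 ∧ W = 0 :=
  stmt_11_general A B γ K hK AK hAK S hSsymm Y W h1 h2 h3
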